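/- Projection characterization of the trace of the positive part: for a Hermitian matrix A : Matrix n n ℂ, (i) for every orthogonal projection P : Matrix n n ℂ (i.e. P Hermitian with P * P = P), Re(Tr(P * A)) ≤ Re(Tr(A₊)); and (ii) there exists an orthogonal projection P with Re(Tr(P * A)) = Re(Tr(A₊)). -/

import Mathlib

/-!
For an orthogonal projection `P` and `B ≥ 0` one has `Tr (P B) = Tr (P B P) ≥ 0`. Applied to
`A₊ - A ≥ 0`, and to the projection `1 - P` together with `A₊ ≥ 0`, this gives
`Tr (P A) ≤ Tr (P A₊) ≤ Tr A₊`. The bound is attained by the spectral projection of `A` onto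
`[0, ∞)`, since its product with `A` is `A₊`.
-/

open Matrix
open scoped ComplexOrder

/-- The positive part of a matrix, given by the continuous functional calculus
applied to `fun x => max x 0` (for a Hermitian matrix this replaces each
eigenvalue `x` in the spectral decomposition by `max x 0`). -/
noncomputable def matPosPart {n : Type*} [Fintype n] [DecidableEq n]
    (A : Matrix n n ℂ) : Matrix n n ℂ :=
  cfc (fun x : ℝ => max x 0) A
namespace Matrix

section Projection

variable {n R : Type*} [Fintype n] [CommRing R] [PartialOrder R] [StarRing R]
  [IsOrderedAddMonoid R] {P A B : Matrix n n R}

theorem trace_mul_nonneg_of_posSemidef (hP : P.IsHermitian) (hPP : P * P = P)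
    (hB : B.PosSemidef) : 0 ≤ (P * B).trace := by
  have hconj : (P * B).trace = (Pᴴ * B * P).trace := by
    rw [hP.eq, trace_mul_cycle, hPP]
  exact hconj ▸ (hB.conjTranspose_mul_mul_same P).trace_nonneg

theorem trace_mul_le_trace_mul_of_posSemidef_sub (hP : P.IsHermitian) (hPP : P * P = P)
    (hAB : (B - A).PosSemidef) : (P * A).trace ≤ (P * B).trace := by
  simpa [mul_sub, trace_sub] using trace_mul_nonneg_of_posSemidef hP hPP hAB

theorem trace_mul_le_trace_of_posSemidef [DecidableEq n] (hP : P.IsHermitian)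
    (hPP : P * P = P) (hB : B.PosSemidef) : (P * B).trace ≤ B.trace := by
  have hQ : (1 - P).IsHermitian := isHermitian_one.sub hP
  have hQQ : (1 - P) * (1 - P) = 1 - P := by
    rw [sub_mul, mul_sub, mul_sub, hPP]; simp
  simpa [sub_mul, trace_sub] using trace_mul_nonneg_of_posSemidef hQ hQQ hB

end Projection

end Matrix

section PosPart

open scoped MatrixOrder

variable {n : Type*} [Fintype n] [DecidableEq n] {A : Matrix n n ℂ}

theorem posSemidef_matPosPart : (matPosPart A).PosSemidef :=
  nonneg_iff_posSemidef.1 (cfc_nonneg fun x _ => le_max_right x 0)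

theorem posSemidef_matPosPart_sub (hA : A.IsHermitian) : (matPosPart A - A).PosSemidef := by
  rw [← nonneg_iff_posSemidef]
  nth_rw 2 [← cfc_id ℝ A hA.isSelfAdjoint]
  rw [matPosPart, ← cfc_sub _ _ A]
  exact cfc_nonneg fun x _ => sub_nonneg.2 (le_max_left x 0)

noncomputable def nonnegSpectralProj (A : Matrix n n ℂ) : Matrix n n ℂ :=
  cfc (fun x : ℝ => if 0 ≤ x then (1 : ℝ) else 0) A

theorem isHermitian_nonnegSpectralProj : (nonnegSpectralProj A).IsHermitian :=
  cfc_predicate _ A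

theorem nonnegSpectralProj_mul_self :
    nonnegSpectralProj A * nonnegSpectralProj A = nonnegSpectralProj A := by
  rw [nonnegSpectralProj, ← cfc_mul _ _ A (A.finite_real_spectrum.continuousOn _)
    (A.finite_real_spectrum.continuousOn _)]
  congr 1
  funext x
  split_ifs <;> simp

theorem nonnegSpectralProj_mul (hA : A.IsHermitian) :
    nonnegSpectralProj A * A = matPosPart A := by
  nth_rw 2 [← cfc_id ℝ A hA.isSelfAdjoint]
  rw [nonnegSpectralProj, ← cfc_mul _ _ A (A.finite_real_spectrum.continuousOn _)]
  congr 1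
  funext x
  split_ifs with hx
  · simp [hx]
  · simp [(not_le.1 hx).le]

end PosPart

theorem trace_posPart_eq_sup_proj
    {n : Type*} [Fintype n] [DecidableEq n]
    (A : Matrix n n ℂ) (hA : A.IsHermitian) :
    (∀ P : Matrix n n ℂ, P.IsHermitian → P * P = P →
        (P * A).trace.re ≤ (matPosPart A).trace.re) ∧
      ∃ P : Matrix n n ℂ, P.IsHermitian ∧ P * P = P ∧
        (P * A).trace.re = (matPosPart A).trace.re := by
  refine ⟨fun P hP hPP => ?_, nonnegSpectralProj A, isHermitian_nonnegSpectralProj,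
    nonnegSpectralProj_mul_self, by rw [nonnegSpectralProj_mul hA]⟩
  have hle : (P * A).trace ≤ (matPosPart A).trace :=
    (trace_mul_le_trace_mul_of_posSemidef_sub hP hPP (posSemidef_matPosPart_sub hA)).trans
      (trace_mul_le_trace_of_posSemidef hP hPP posSemidef_matPosPart)
  exact Complex.re_le_re hle
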